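/- arXiv:2009.02505 — 3 statements merged into one kernel-verified Lean document; each statement's English description precedes it below -/
import Mathlib

section
/- Let $I_n=(t_{n-1},t_n)$ with $k_n = t_n - t_{n-1}$, let $\mathsf{A}:[0,T]\times\mathbb{R}^d \to \mathbb{R}^{d\times d}$ satisfy $\sup_{t}\|\mathsf{A}(t,u)x\| \le C_{\mathsf{A}}\|x\|$ for all $x \in \mathbb{R}^d$, and let $u \in \mathcal{P}^{r_n}(I_n;\mathbb{R}^d)$. If $k_n < (C_{\mathsf{A}} C_P)^{-1}$, where $C_P$ is the Poincaré constant, then the linear operator $\mathsf{G}^n_{\mathsf{A}}(\cdot,u): X_0^{r_n} \to \mathcal{P}^{r_n-1}(I_n;\mathbb{R}^d)'$ defined by $\langle \mathsf{G}^n_{\mathsf{A}}(t,u)x, \varphi\rangle = \int_{I_n}(\dot x,\varphi)\,dt - \int_{I_n}(\mathsf{A}(t,u(t))x(t),\varphi(t))\,dt$ has trivial kernel, i.e. it is injective on $X_0^{r_n} = \{x \in \mathcal{P}^{r_n}(I_n;\mathbb{R}^d): x(t_{n-1})=0\}$. -/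
/-! Testing the kernel equation with `φ = ẋ`, admissible because `ẋ` has degree `rₙ - 1`, gives
`‖ẋ‖² = ∫ (A x, ẋ) ≤ C_A ‖x‖ ‖ẋ‖` in `L²(Iₙ)`, and the Poincaré inequality bounds the right-hand
side by `kₙ C_P C_A ‖ẋ‖²`. Since `kₙ C_P C_A < 1`, `ẋ = 0`, so the polynomial `x` is constant,
equal to `x(tₙ₋₁) = 0`. -/

open MeasureTheory Real
open scoped RealInnerProductSpace

abbrev E (d : ℕ) := EuclideanSpace ℝ (Fin d)

/-- The `L²` norm of a vector-valued function over the interval `(a,b)`. -/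
noncomputable def L2norm {d : ℕ} (f : ℝ → E d) (a b : ℝ) : ℝ :=
  Real.sqrt (∫ t in a..b, ‖f t‖ ^ 2)

/-- `x : ℝ → ℝ^d` is (componentwise) a polynomial of degree at most `r`. -/
def IsPolyDeg {d : ℕ} (r : ℕ) (x : ℝ → E d) : Prop :=
  ∃ p : Fin d → Polynomial ℝ, (∀ i, (p i).natDegree ≤ r) ∧ ∀ t i, x t i = (p i).eval t

open Polynomial Set

namespace IsPolyDeg

variable {d : ℕ}

lemma hasDerivAt_of_eval {p : Fin d → ℝ[X]} {x : ℝ → E d} (hx : ∀ t i, x t i = (p i).eval t)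
    (t : ℝ) : HasDerivAt x (WithLp.toLp 2 fun i => (p i).derivative.eval t) t := by
  have hx_eq : x = fun s => (EuclideanSpace.equiv (Fin d) ℝ).symm fun i => (p i).eval s := by
    funext s; ext i; simp [hx s i]
  rw [hx_eq]
  exact ((EuclideanSpace.equiv (Fin d) ℝ).symm : (Fin d → ℝ) →L[ℝ] E d).hasFDerivAt.comp_hasDerivAt
    t (hasDerivAt_pi.2 fun i => (p i).hasDerivAt t)

variable {r : ℕ} {x : ℝ → E d}

lemma differentiable (hx : IsPolyDeg r x) : Differentiable ℝ x := by
  obtain ⟨p, -, hpx⟩ := hx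
  exact fun t => (hasDerivAt_of_eval hpx t).differentiableAt

lemma continuous (hx : IsPolyDeg r x) : Continuous x :=
  hx.differentiable.continuous

protected lemma deriv (hx : IsPolyDeg r x) : IsPolyDeg (r - 1) (deriv x) := by
  obtain ⟨p, hp, hpx⟩ := hx
  refine ⟨fun i => (p i).derivative, fun i => (natDegree_derivative_le _).trans
    (Nat.sub_le_sub_right (hp i) 1), fun t i => ?_⟩
  rw [(hasDerivAt_of_eval hpx t).deriv]

lemma eq_zero_of_eqOn_Ioo {a b : ℝ} (hab : a < b) (hx : IsPolyDeg r x)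
    (hzero : EqOn x 0 (Ioo a b)) : x = 0 := by
  obtain ⟨p, -, hpx⟩ := hx
  have hp : ∀ i, p i = 0 := fun i => eq_zero_of_infinite_isRoot _ <|
    (Ioo_infinite hab).mono fun t ht => by
      simpa [hpx] using congrArg (· i) (hzero ht)
  funext t; ext i
  simp [hpx, hp]

end IsPolyDeg

section L2norm

variable {d : ℕ} {f g : ℝ → E d} {a b : ℝ}

lemma L2norm_nonneg : 0 ≤ L2norm f a b :=
  Real.sqrt_nonneg _

lemma L2norm_sq (hab : a ≤ b) : L2norm f a b ^ 2 = ∫ t in a..b, ‖f t‖ ^ 2 :=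
  Real.sq_sqrt (intervalIntegral.integral_nonneg hab fun _ _ => sq_nonneg _)

lemma Continuous.memLp_two_restrict_Ioc {F : Type*} [NormedAddCommGroup F] {f : ℝ → F}
    (hf : Continuous f) :
    MemLp f 2 (volume.restrict (Ioc a b)) :=
  (memLp_two_iff_integrable_sq_norm hf.aestronglyMeasurable).2
    (hf.norm.pow 2).integrableOn_Ioc

lemma integral_inner_le_L2norm_mul (hab : a ≤ b) (hf : Continuous f) (hg : Continuous g) :
    ∫ t in a..b, ⟪f t, g t⟫ ≤ L2norm f a b * L2norm g a b := by
  have hHolder := integral_mul_le_Lp_mul_Lq_of_nonneg (μ := volume.restrict (Ioc a b))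
    Real.HolderConjugate.two_two
    (ae_of_all _ fun t => norm_nonneg (f t))
    (ae_of_all _ fun t => norm_nonneg (g t))
    (by simpa using hf.memLp_two_restrict_Ioc.norm)
    (by simpa using hg.memLp_two_restrict_Ioc.norm)
  calc ∫ t in a..b, ⟪f t, g t⟫
      ≤ ∫ t in a..b, ‖f t‖ * ‖g t‖ :=
        intervalIntegral.integral_mono_on hab ((hf.inner hg).intervalIntegrable a b)
          ((hf.norm.mul hg.norm).intervalIntegrable a b) fun t _ => real_inner_le_norm _ _
    _ ≤ L2norm f a b * L2norm g a b := by
        simpa [L2norm, intervalIntegral.integral_of_le hab, Real.sqrt_eq_rpow] using hHolder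

lemma L2norm_le_mul_of_norm_le {C : ℝ} (hC : 0 ≤ C) (hab : a ≤ b) (hf : Continuous f)
    (hg : Continuous g) (hfg : ∀ t, ‖f t‖ ≤ C * ‖g t‖) : L2norm f a b ≤ C * L2norm g a b := by
  have hsq : ∫ t in a..b, ‖f t‖ ^ 2 ≤ C ^ 2 * ∫ t in a..b, ‖g t‖ ^ 2 := by
    rw [← intervalIntegral.integral_const_mul]
    refine intervalIntegral.integral_mono_on hab (Continuous.intervalIntegrable (by fun_prop) a b)
      (Continuous.intervalIntegrable (by fun_prop) a b) fun t _ => ?_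
    rw [← mul_pow]
    exact pow_le_pow_left₀ (norm_nonneg _) (hfg t) 2
  calc L2norm f a b ≤ Real.sqrt (C ^ 2 * ∫ t in a..b, ‖g t‖ ^ 2) := Real.sqrt_le_sqrt hsq
    _ = C * L2norm g a b := by rw [Real.sqrt_mul (sq_nonneg C), Real.sqrt_sq hC, L2norm]

lemma eqOn_zero_of_L2norm_eq_zero (hab : a ≤ b) (hf : Continuous f) (h : L2norm f a b = 0) :
    EqOn f 0 (Ioo a b) := by
  have hint : ∫ t in a..b, ‖f t‖ ^ 2 = 0 := by rw [← L2norm_sq hab, h, sq, zero_mul]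
  have hae : (fun t => ‖f t‖ ^ 2) =ᵐ[volume.restrict (Ioc a b)] 0 :=
    (intervalIntegral.integral_eq_zero_iff_of_le_of_nonneg_ae hab (ae_of_all _ fun t => sq_nonneg _)
      (Continuous.intervalIntegrable (by fun_prop) a b)).1 hint
  have hsq : EqOn (fun t => ‖f t‖ ^ 2) 0 (Ioo a b) :=
    Measure.eqOn_open_of_ae_eq (ae_restrict_of_ae_restrict_of_subset Ioo_subset_Ioc_self hae)
      isOpen_Ioo (hf.norm.pow 2).continuousOn continuousOn_const
  intro t ht
  simpa using hsq ht

end L2norm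

theorem GA_injective_general {d : ℕ} (tp tn : ℝ) (htn : tp < tn) (rn : ℕ)
    (A : ℝ → E d → (E d →L[ℝ] E d))
    (C_A C_P : ℝ) (hCA : 0 ≤ C_A)
    (hAbound : ∀ (t : ℝ) (v x : E d), ‖A t v x‖ ≤ C_A * ‖x‖)
    (hAcont : Continuous fun p : ℝ × E d => A p.1 p.2)
    (u : ℝ → E d) (hu : IsPolyDeg rn u)
    (hPoincare : ∀ y : ℝ → E d, IsPolyDeg rn y → y tp = 0 →
      L2norm y tp tn ≤ (tn - tp) * C_P * L2norm (deriv y) tp tn)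
    (hk : tn - tp < (C_A * C_P)⁻¹)
    (x : ℝ → E d) (hx : IsPolyDeg rn x) (hx0 : x tp = 0)
    (hker : ∀ φ : ℝ → E d, IsPolyDeg (rn - 1) φ →
      (∫ t in tp..tn, (⟪deriv x t, φ t⟫ - ⟪A t (u t) (x t), φ t⟫)) = 0) :
    ∀ t ∈ Set.Icc tp tn, x t = 0 := by
  have hx' : Continuous (deriv x) := hx.deriv.continuous
  have hAx : Continuous fun t => A t (u t) (x t) :=
    (hAcont.comp (continuous_id.prodMk hu.continuous)).clm_apply hx.continuous
  have hcoef : (tn - tp) * C_P * C_A < 1 := by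
    have hpos : 0 < C_A * C_P := inv_pos.1 ((sub_pos.2 htn).trans hk)
    calc (tn - tp) * C_P * C_A = (tn - tp) * (C_A * C_P) := by ring
      _ < (C_A * C_P)⁻¹ * (C_A * C_P) := mul_lt_mul_of_pos_right hk hpos
      _ = 1 := inv_mul_cancel₀ hpos.ne'
  set N := L2norm (deriv x) tp tn
  have hener : N ^ 2 ≤ (tn - tp) * C_P * C_A * N ^ 2 := calc
    N ^ 2 = ∫ t in tp..tn, ⟪deriv x t, deriv x t⟫ := by
        simp only [N, L2norm_sq htn.le, real_inner_self_eq_norm_sq]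
    _ = ∫ t in tp..tn, ⟪A t (u t) (x t), deriv x t⟫ := by
        rw [← sub_eq_zero, ← intervalIntegral.integral_sub ((hx'.inner hx').intervalIntegrable _ _)
          ((hAx.inner hx').intervalIntegrable _ _)]
        exact hker _ hx.deriv
    _ ≤ L2norm (fun t => A t (u t) (x t)) tp tn * N :=
        integral_inner_le_L2norm_mul htn.le hAx hx'
    _ ≤ C_A * L2norm x tp tn * N := by
        gcongr
        · exact L2norm_nonneg
        · exact L2norm_le_mul_of_norm_le hCA htn.le hAx hx.continuous fun t => hAbound _ _ _
    _ ≤ C_A * ((tn - tp) * C_P * N) * N := by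
        gcongr
        · exact L2norm_nonneg
        · exact hPoincare x hx hx0
    _ = (tn - tp) * C_P * C_A * N ^ 2 := by ring
  have hN : N ^ 2 = 0 := by nlinarith [sq_nonneg N]
  have hderiv : deriv x = 0 := hx.deriv.eq_zero_of_eqOn_Ioo htn
    (eqOn_zero_of_L2norm_eq_zero htn.le hx' (pow_eq_zero_iff two_ne_zero |>.1 hN))
  intro t _
  rw [is_const_of_deriv_eq_zero hx.differentiable (congrFun hderiv) t tp, hx0]

/-- Injectivity (trivial kernel) of the linearized operator `G_A` on
`X₀ = {x ∈ P^{rₙ} : x(tₙ₋₁) = 0}` under the time-step restriction `kₙ < (C_A C_P)⁻¹`. -/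
theorem GA_injective {d : ℕ} (tp tn : ℝ) (htn : tp < tn) (rn : ℕ)
    (A : ℝ → E d → (E d →L[ℝ] E d))
    (C_A C_P : ℝ) (hCA : 0 ≤ C_A) (hCP : 0 < C_P)
    (hAbound : ∀ (t : ℝ) (v x : E d), ‖A t v x‖ ≤ C_A * ‖x‖)
    (hAcont : Continuous fun p : ℝ × E d => A p.1 p.2)
    (u : ℝ → E d) (hu : IsPolyDeg rn u)
    (hPoincare : ∀ y : ℝ → E d, IsPolyDeg rn y → y tp = 0 →
      L2norm y tp tn ≤ (tn - tp) * C_P * L2norm (deriv y) tp tn)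
    (hk : tn - tp < (C_A * C_P)⁻¹)
    (x : ℝ → E d) (hx : IsPolyDeg rn x) (hx0 : x tp = 0)
    (hker : ∀ φ : ℝ → E d, IsPolyDeg (rn - 1) φ →
      (∫ t in tp..tn, (⟪deriv x t, φ t⟫ - ⟪A t (u t) (x t), φ t⟫)) = 0) :
    ∀ t ∈ Set.Icc tp tn, x t = 0 :=
  GA_injective_general tp tn htn rn A C_A C_P hCA hAbound hAcont u hu hPoincare hk x hx hx0 hker
end

section
/- With $\mathsf{A}\equiv 0$ (Picard/Banach fixed point linearization), the fixed point map $g$ defined by $g(x) = x - [\mathsf{G}^n_0]^{-1}\mathsf{G}^n(t,x)$ satisfies $\|g(x)-g(y)\|_{L^2(I_n;\mathbb{R}^d)} \le L\, k_n C_P\, \|x-y\|_{L^2(I_n;\mathbb{R}^d)}$ for all $x,y \in X_a^{r_n}$; in particular, $g$ is a contraction whenever $k_n < (L C_P)^{-1}$. -/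
open MeasureTheory Real
open scoped RealInnerProductSpace

/-- Cauchy–Schwarz inequality for interval integrals of continuous real functions. -/
lemma cs_interval (tp tn : ℝ) (h : tp ≤ tn) (f g : ℝ → ℝ) (hf : Continuous f) (hg : Continuous g) :
    ∫ t in tp..tn, f t * g t ≤
      Real.sqrt (∫ t in tp..tn, f t ^ 2) * Real.sqrt (∫ t in tp..tn, g t ^ 2) := by
  set A := ∫ t in tp..tn, f t ^ 2 with hA'
  set B := ∫ t in tp..tn, f t * g t with hB'
  set C := ∫ t in tp..tn, g t ^ 2 with hC'
  have hA : 0 ≤ A := intervalIntegral.integral_nonneg h (fun t _ => sq_nonneg _)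
  have hC : 0 ≤ C := intervalIntegral.integral_nonneg h (fun t _ => sq_nonneg _)
  have key : ∀ l : ℝ, 0 ≤ A - 2 * l * B + l ^ 2 * C := by
    intro l
    have h0 : 0 ≤ ∫ t in tp..tn, (f t - l * g t) ^ 2 :=
      intervalIntegral.integral_nonneg h (fun t _ => sq_nonneg _)
    have e : ∀ t, (f t - l * g t) ^ 2 = f t ^ 2 - 2 * l * (f t * g t) + l ^ 2 * g t ^ 2 := by
      intro t; ring
    rw [intervalIntegral.integral_congr
      (g := fun t => f t ^ 2 - 2 * l * (f t * g t) + l ^ 2 * g t ^ 2) (fun t _ => e t)] at h0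
    rw [intervalIntegral.integral_add, intervalIntegral.integral_sub,
      intervalIntegral.integral_const_mul, intervalIntegral.integral_const_mul] at h0
    · exact h0
    · exact (hf.pow 2).intervalIntegrable _ _
    · exact (continuous_const.mul (hf.mul hg)).intervalIntegrable _ _
    · exact ((hf.pow 2).sub (continuous_const.mul (hf.mul hg))).intervalIntegrable _ _
    · exact (continuous_const.mul (hg.pow 2)).intervalIntegrable _ _
  have hB2 : B ^ 2 ≤ A * C := by
    by_cases hC0 : C = 0
    · have hB : B = 0 := by
        by_contra hB
        have h2 : 2 * ((A + 1) / (2 * B)) * B = A + 1 := by field_simp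
        have := key ((A + 1) / (2 * B))
        rw [hC0] at this
        nlinarith
      rw [hB, hC0]; nlinarith
    · have hCpos : 0 < C := lt_of_le_of_ne hC (Ne.symm hC0)
      have hk := key (B / C)
      have heq : A - 2 * (B / C) * B + (B / C) ^ 2 * C = A - B ^ 2 / C := by
        field_simp; ring
      rw [heq] at hk
      rw [sub_nonneg, div_le_iff₀ hCpos] at hk
      exact hk
  calc B ≤ |B| := le_abs_self B
    _ = Real.sqrt (B ^ 2) := (Real.sqrt_sq_eq_abs B).symm
    _ ≤ Real.sqrt (A * C) := Real.sqrt_le_sqrt hB2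
    _ = Real.sqrt A * Real.sqrt C := Real.sqrt_mul hA C

lemma IsPolyDeg.continuous' {d r : ℕ} {x : ℝ → E d} (h : IsPolyDeg r x) : Continuous x := by
  obtain ⟨p, _, hp⟩ := h
  have hxe : x = fun t => (EuclideanSpace.equiv (Fin d) ℝ).symm (fun i => (p i).eval t) := by
    funext t; ext i; exact hp t i
  rw [hxe]
  exact (EuclideanSpace.equiv (Fin d) ℝ).symm.continuous.comp
    (continuous_pi fun i => (p i).continuous)

lemma IsPolyDeg.sub' {d r : ℕ} {x y : ℝ → E d} (hx : IsPolyDeg r x) (hy : IsPolyDeg r y) :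
    IsPolyDeg r (fun t => x t - y t) := by
  obtain ⟨p, hpd, hp⟩ := hx
  obtain ⟨q, hqd, hq⟩ := hy
  refine ⟨fun i => p i - q i, fun i => (Polynomial.natDegree_sub_le _ _).trans ?_, fun t i => ?_⟩
  · exact max_le (hpd i) (hqd i)
  · show x t i - y t i = _
    rw [hp, hq, Polynomial.eval_sub]

lemma IsPolyDeg.deriv' {d r : ℕ} {x : ℝ → E d} (h : IsPolyDeg r x) :
    (∀ t, HasDerivAt x (deriv x t) t) ∧ IsPolyDeg (r - 1) (deriv x) := by
  obtain ⟨p, hpd, hp⟩ := h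
  set x' : ℝ → E d :=
    fun t => (EuclideanSpace.equiv (Fin d) ℝ).symm fun i => ((p i).derivative).eval t with hx'
  have hder : ∀ t, HasDerivAt x (x' t) t := by
    intro t
    have hxe : x = fun t => (EuclideanSpace.equiv (Fin d) ℝ).symm (fun i => (p i).eval t) := by
      funext t; ext i; exact hp t i
    rw [hxe]
    exact ((EuclideanSpace.equiv (Fin d) ℝ).symm.hasFDerivAt.comp_hasDerivAt t
      (hasDerivAt_pi.2 fun i => (p i).hasDerivAt t))
  have hdx : deriv x = x' := funext fun t => (hder t).deriv
  constructor
  · intro t; rw [hdx]; exact hder t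
  · rw [hdx]
    exact ⟨fun i => (p i).derivative,
      fun i => (Polynomial.natDegree_derivative_le _).trans (Nat.sub_le_sub_right (hpd i) 1),
      fun t i => rfl⟩

/-- With `A ≡ 0` (Picard/Banach fixed point linearization), the fixed point map
`g(x) = x - [G₀]⁻¹ G(t,x)` satisfies `‖g(x)-g(y)‖ ≤ L kₙ C_P ‖x-y‖` in `L²(Iₙ)`;
in particular `g` is a contraction whenever `kₙ < (L C_P)⁻¹`. -/
theorem g_lipschitz_picard {d : ℕ} (tp tn : ℝ) (htn : tp < tn) (rn : ℕ)
    (F : ℝ → E d → E d) (L : ℝ) (hL : 0 ≤ L)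
    (hFcont : Continuous fun p : ℝ × E d => F p.1 p.2)
    (hFlip : ∀ (t : ℝ) (v w : E d), ‖F t v - F t w‖ ≤ L * ‖v - w‖)
    (C_P : ℝ) (hCP : 0 < C_P)
    (hPoincare : ∀ y : ℝ → E d, IsPolyDeg rn y → y tp = 0 →
      L2norm y tp tn ≤ (tn - tp) * C_P * L2norm (deriv y) tp tn)
    (a : E d) (g : (ℝ → E d) → (ℝ → E d))
    (hg : ∀ x : ℝ → E d, IsPolyDeg rn x → x tp = a →
      IsPolyDeg rn (g x) ∧ g x tp = a ∧
      ∀ φ : ℝ → E d, IsPolyDeg (rn - 1) φ →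
        (-(∫ t in tp..tn, ⟪deriv (g x) t - deriv x t, φ t⟫)
          = ∫ t in tp..tn, (⟪deriv x t, φ t⟫ - ⟪F t (x t), φ t⟫))) :
    (∀ x y : ℝ → E d, IsPolyDeg rn x → x tp = a → IsPolyDeg rn y → y tp = a →
      L2norm (fun t => g x t - g y t) tp tn
        ≤ L * (tn - tp) * C_P * L2norm (fun t => x t - y t) tp tn) ∧
    (tn - tp < (L * C_P)⁻¹ → L * (tn - tp) * C_P < 1) := by
  have hle : tp ≤ tn := le_of_lt htn
  constructor
  · intro x y hx hxa hy hya
    obtain ⟨hgxp, hgxa, hgxw⟩ := hg x hx hxa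
    obtain ⟨hgyp, hgya, hgyw⟩ := hg y hy hya
    -- derivative facts
    obtain ⟨hDu, hDup⟩ := hgxp.deriv'
    obtain ⟨hDv, hDvp⟩ := hgyp.deriv'
    obtain ⟨_, hDxp⟩ := hx.deriv'
    obtain ⟨_, hDyp⟩ := hy.deriv'
    set Du := deriv (g x) with hDu'
    set Dv := deriv (g y) with hDv'
    set φ : ℝ → E d := fun t => Du t - Dv t with hφ'
    have hφp : IsPolyDeg (rn - 1) φ := hDup.sub' hDvp
    -- continuity
    have cDu : Continuous Du := hDup.continuous'
    have cDv : Continuous Dv := hDvp.continuous'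
    have cDx : Continuous (deriv x) := hDxp.continuous'
    have cDy : Continuous (deriv y) := hDyp.continuous'
    have cφ : Continuous φ := cDu.sub cDv
    have cx : Continuous x := hx.continuous'
    have cy : Continuous y := hy.continuous'
    have cFx : Continuous fun t => F t (x t) := hFcont.comp (continuous_id.prodMk cx)
    have cFy : Continuous fun t => F t (y t) := hFcont.comp (continuous_id.prodMk cy)
    -- weak form identities
    have hIx : (∫ t in tp..tn, ⟪Du t, φ t⟫) = ∫ t in tp..tn, ⟪F t (x t), φ t⟫ := by
      have h1 := hgxw φ hφp
      simp_rw [inner_sub_left] at h1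
      rw [intervalIntegral.integral_sub ((cDu.inner cφ).intervalIntegrable _ _)
          ((cDx.inner cφ).intervalIntegrable _ _),
        intervalIntegral.integral_sub ((cDx.inner cφ).intervalIntegrable _ _)
          ((cFx.inner cφ).intervalIntegrable _ _)] at h1
      linarith
    have hIy : (∫ t in tp..tn, ⟪Dv t, φ t⟫) = ∫ t in tp..tn, ⟪F t (y t), φ t⟫ := by
      have h1 := hgyw φ hφp
      simp_rw [inner_sub_left] at h1
      rw [intervalIntegral.integral_sub ((cDv.inner cφ).intervalIntegrable _ _)
          ((cDy.inner cφ).intervalIntegrable _ _),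
        intervalIntegral.integral_sub ((cDy.inner cφ).intervalIntegrable _ _)
          ((cFy.inner cφ).intervalIntegrable _ _)] at h1
      linarith
    set Q := ∫ t in tp..tn, ‖φ t‖ ^ 2 with hQ'
    have hQ0 : 0 ≤ Q := intervalIntegral.integral_nonneg hle (fun t _ => sq_nonneg _)
    set S := Real.sqrt Q with hS'
    set N := L2norm (fun t => x t - y t) tp tn with hN'
    have hN0 : 0 ≤ N := Real.sqrt_nonneg _
    have hS0 : 0 ≤ S := Real.sqrt_nonneg _
    -- Q = ∫ ⟪Fx - Fy, φ⟫
    have hQeq : Q = ∫ t in tp..tn, ⟪F t (x t) - F t (y t), φ t⟫ := by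
      have e1 : Q = ∫ t in tp..tn, ⟪φ t, φ t⟫ := by
        rw [hQ']
        refine intervalIntegral.integral_congr fun t _ => ?_
        rw [real_inner_self_eq_norm_sq]
      have e2 : (∫ t in tp..tn, (⟪φ t, φ t⟫ : ℝ))
          = ∫ t in tp..tn, (⟪Du t, φ t⟫ - ⟪Dv t, φ t⟫ : ℝ) :=
        intervalIntegral.integral_congr fun t _ => inner_sub_left _ _ _
      have e3 : (∫ t in tp..tn, (⟪F t (x t) - F t (y t), φ t⟫ : ℝ))
          = ∫ t in tp..tn, (⟪F t (x t), φ t⟫ - ⟪F t (y t), φ t⟫ : ℝ) :=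
        intervalIntegral.integral_congr fun t _ => inner_sub_left _ _ _
      rw [e1, e2, e3]
      rw [intervalIntegral.integral_sub ((cDu.inner cφ).intervalIntegrable _ _)
          ((cDv.inner cφ).intervalIntegrable _ _),
        intervalIntegral.integral_sub ((cFx.inner cφ).intervalIntegrable _ _)
          ((cFy.inner cφ).intervalIntegrable _ _)]
      rw [hIx, hIy]
    -- Q ≤ L * N * S
    have hQle : Q ≤ L * (N * S) := by
      rw [hQeq]
      have step1 : (∫ t in tp..tn, ⟪F t (x t) - F t (y t), φ t⟫)
          ≤ ∫ t in tp..tn, (L * ‖x t - y t‖) * ‖φ t‖ := by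
        refine intervalIntegral.integral_mono_on hle
          (((cFx.sub cFy).inner cφ).intervalIntegrable _ _)
          (((continuous_const.mul (cx.sub cy).norm).mul cφ.norm).intervalIntegrable _ _)
          fun t _ => ?_
        calc ⟪F t (x t) - F t (y t), φ t⟫ ≤ ‖F t (x t) - F t (y t)‖ * ‖φ t‖ :=
              real_inner_le_norm _ _
          _ ≤ (L * ‖x t - y t‖) * ‖φ t‖ :=
              mul_le_mul_of_nonneg_right (hFlip t (x t) (y t)) (norm_nonneg _)
      have step2 : (∫ t in tp..tn, (L * ‖x t - y t‖) * ‖φ t‖)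
          = L * ∫ t in tp..tn, ‖x t - y t‖ * ‖φ t‖ := by
        simp_rw [mul_assoc]
        exact intervalIntegral.integral_const_mul _ _
      have step3 : (∫ t in tp..tn, ‖x t - y t‖ * ‖φ t‖) ≤ N * S := by
        have := cs_interval tp tn hle (fun t => ‖x t - y t‖) (fun t => ‖φ t‖)
          (cx.sub cy).norm cφ.norm
        simpa [hN', hS', hQ', L2norm] using this
      calc (∫ t in tp..tn, ⟪F t (x t) - F t (y t), φ t⟫)
          ≤ ∫ t in tp..tn, (L * ‖x t - y t‖) * ‖φ t‖ := step1
        _ = L * ∫ t in tp..tn, ‖x t - y t‖ * ‖φ t‖ := step2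
        _ ≤ L * (N * S) := mul_le_mul_of_nonneg_left step3 hL
    -- S ≤ L * N
    have hSle : S ≤ L * N := by
      have hS2 : S ^ 2 = Q := Real.sq_sqrt hQ0
      rcases eq_or_lt_of_le hS0 with h0 | h0
      · rw [← h0]; positivity
      · nlinarith
    -- Poincaré
    set z : ℝ → E d := fun t => g x t - g y t with hz'
    have hzp : IsPolyDeg rn z := hgxp.sub' hgyp
    have hz0 : z tp = 0 := by show g x tp - g y tp = 0; rw [hgxa, hgya, sub_self]
    have hzd : deriv z = φ := by
      funext t
      exact ((hDu t).sub (hDv t)).deriv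
    have hP := hPoincare z hzp hz0
    rw [hzd] at hP
    have hLφ : L2norm φ tp tn = S := rfl
    calc L2norm z tp tn ≤ (tn - tp) * C_P * L2norm φ tp tn := hP
      _ = (tn - tp) * C_P * S := by rw [hLφ]
      _ ≤ (tn - tp) * C_P * (L * N) := by
          have h1 : (0:ℝ) ≤ tn - tp := by linarith
          exact mul_le_mul_of_nonneg_left hSle (by positivity)
      _ = L * (tn - tp) * C_P * N := by ring
  · intro h
    rcases eq_or_lt_of_le hL with hL0 | hLpos
    · rw [← hL0]; norm_num
    · have hLC : 0 < L * C_P := mul_pos hLpos hCP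
      rw [inv_eq_one_div, lt_div_iff₀ hLC] at h
      nlinarith
end

section
/- Let $\mathsf{F}:[0,T]\times\mathbb{R}^d\to\mathbb{R}^d$ be continuous and Lipschitz in the second variable with constant $L$. For any $a \in \mathbb{R}^d$ and any subinterval $I_n$ with $k_n < (LC_P)^{-1}$, there exists a unique polynomial $\mathcal{U} \in \mathcal{P}^{r_n}(I_n;\mathbb{R}^d)$ with $\mathcal{U}(t_{n-1})=a$ such that $\int_{I_n}(\dot{\mathcal{U}}(t),\varphi(t))\,dt = \int_{I_n}(\mathsf{F}(t,\mathcal{U}(t)),\varphi(t))\,dt$ for all polynomials $\varphi$ of degree at most $r_n-1$. -/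
open MeasureTheory Real
open scoped RealInnerProductSpace

/-!
Write the trial function as `U = a + ∫_{tp} q` with `q` a polynomial of degree `< rₙ`. For the
`L²(Iₙ)` inner product on such `q`, the cG equations say that `q` is the Riesz representative
of `w ↦ ∫ ⟪F(s, U(s)), w(s)⟫`. Cauchy–Schwarz, the Lipschitz bound on `F` and the Poincaré
inequality for `U₁ - U₂` (which vanishes at `tp`) make the map sending `q` to that representative
Lipschitz with constant `L kₙ C_P < 1`, so the Banach fixed point theorem gives exactly one
solution.
-/

open Polynomial Set InnerProductSpace

namespace CGPicard

noncomputable section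

theorem existsUnique_inner_eq_of_lipschitzWith {V : Type*} [NormedAddCommGroup V]
    [InnerProductSpace ℝ V] [CompleteSpace V] {K : NNReal} (hK : K < 1) {ℓ : V → StrongDual ℝ V}
    (hℓ : LipschitzWith K ℓ) : ∃! q : V, ∀ w, ⟪q, w⟫ = ℓ q w := by
  have hlip := (toDual ℝ V).symm.lipschitz.comp hℓ
  rw [one_mul] at hlip
  have hg : ContractingWith K fun q => (toDual ℝ V).symm (ℓ q) := ⟨hK, hlip⟩
  have hfixed : ∀ q, Function.IsFixedPt (fun q => (toDual ℝ V).symm (ℓ q)) q ↔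
      ∀ w, ⟪q, w⟫ = ℓ q w := fun q => by
    rw [Function.IsFixedPt, LinearIsometryEquiv.symm_apply_eq, eq_comm,
      ContinuousLinearMap.ext_iff]
    rfl
  exact ⟨_, (hfixed _).1 hg.fixedPoint_isFixedPt,
    fun q hq => hg.fixedPoint_unique ((hfixed q).2 hq)⟩

lemma L2norm_nonneg {d : ℕ} (f : ℝ → E d) (a b : ℝ) : 0 ≤ L2norm f a b :=
  Real.sqrt_nonneg _

lemma eqOn_Ioo_zero_of_integral_eq_zero {f : ℝ → ℝ} {a b : ℝ} (hab : a ≤ b) (hf : Continuous f)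
    (hf0 : 0 ≤ f) (h : ∫ t in a..b, f t = 0) : EqOn f 0 (Ioo a b) := by
  have hae := (intervalIntegral.integral_eq_zero_iff_of_le_of_nonneg_ae hab
    (Filter.Eventually.of_forall hf0) (hf.intervalIntegrable a b)).1 h
  exact Measure.eqOn_Ioo_of_ae_eq volume
    (ae_restrict_of_ae_restrict_of_subset Ioo_subset_Ioc_self hae) hf.continuousOn
    continuousOn_const

lemma abs_integral_inner_le {d : ℕ} {a b : ℝ} (hab : a ≤ b) {f g : ℝ → E d}
    (hf : Continuous f) (hg : Continuous g) :
    |∫ t in a..b, ⟪f t, g t⟫| ≤ L2norm f a b * L2norm g a b := by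
  set A := ∫ t in a..b, ‖f t‖ ^ 2
  set B := ∫ t in a..b, ⟪f t, g t⟫
  set C := ∫ t in a..b, ‖g t‖ ^ 2
  have hquad : ∀ x : ℝ, 0 ≤ C * (x * x) + (2 * B) * x + A := by
    intro x
    have hexpand : ∀ t, ‖f t + x • g t‖ ^ 2
        = (x * x) * ‖g t‖ ^ 2 + (2 * x) * ⟪f t, g t⟫ + ‖f t‖ ^ 2 := fun t => by
      rw [norm_add_sq_real, inner_smul_right, norm_smul, Real.norm_eq_abs, mul_pow, sq_abs]
      ring
    calc 0 ≤ ∫ t in a..b, ‖f t + x • g t‖ ^ 2 :=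
          intervalIntegral.integral_nonneg hab fun t _ => sq_nonneg _
      _ = C * (x * x) + (2 * B) * x + A := by
        simp_rw [hexpand]
        rw [intervalIntegral.integral_add, intervalIntegral.integral_add,
          intervalIntegral.integral_const_mul, intervalIntegral.integral_const_mul]
        · ring
        all_goals exact Continuous.intervalIntegrable (by fun_prop) _ _
  have hdiscrim := discrim_le_zero hquad
  rw [discrim] at hdiscrim
  rw [L2norm, L2norm,
    ← Real.sqrt_mul (intervalIntegral.integral_nonneg hab fun t _ => sq_nonneg _)]
  exact Real.abs_le_sqrt (by nlinarith)

lemma L2norm_le_mul {d : ℕ} {a b : ℝ} (hab : a ≤ b) {f g : ℝ → E d} {L : ℝ} (hL : 0 ≤ L)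
    (hf : Continuous f) (hg : Continuous g) (hfg : ∀ t, ‖f t‖ ≤ L * ‖g t‖) :
    L2norm f a b ≤ L * L2norm g a b := by
  rw [L2norm, L2norm, ← Real.sqrt_sq hL, ← Real.sqrt_mul (sq_nonneg L),
    ← intervalIntegral.integral_const_mul]
  refine Real.sqrt_le_sqrt (intervalIntegral.integral_mono_on hab
    (Continuous.intervalIntegrable (by fun_prop) _ _)
    (Continuous.intervalIntegrable (by fun_prop) _ _) fun t _ => ?_)
  rw [← mul_pow]
  exact pow_le_pow_left₀ (norm_nonneg _) (hfg t) 2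

section Primitive

variable {K : Type*} [Field K]

def primitive (x₀ : K) (P : K[X]) : K[X] :=
  let Q := P.sum fun n c => C (c / (n + 1)) * X ^ (n + 1)
  Q - C (Q.eval x₀)

lemma derivative_primitive [CharZero K] (x₀ : K) (P : K[X]) :
    derivative (primitive x₀ P) = P := by
  conv_rhs => rw [← sum_C_mul_X_pow_eq P]
  rw [primitive, derivative_sub, derivative_C, sub_zero, Polynomial.sum_def, Polynomial.sum_def,
    map_sum]
  refine Finset.sum_congr rfl fun n _ => ?_
  rw [derivative_C_mul_X_pow, Nat.add_sub_cancel]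
  congr 2
  push_cast
  field_simp

lemma eval_primitive_self (x₀ : K) (P : K[X]) : (primitive x₀ P).eval x₀ = 0 := by
  simp [primitive]

lemma natDegree_primitive_le {n : ℕ} (x₀ : K) {P : K[X]} (hP : P.degree < n) :
    (primitive x₀ P).natDegree ≤ n := by
  refine (natDegree_sub_le _ _).trans (max_le ?_ (by simp))
  refine natDegree_sum_le_of_forall_le _ _ fun k hk => natDegree_mul_le.trans ?_
  have hk : (k : WithBot ℕ) < n := (le_degree_of_mem_supp k hk).trans_lt hP
  simp only [natDegree_C, natDegree_X_pow, zero_add]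
  exact_mod_cast hk

lemma eq_C_add_primitive_derivative [CharZero K] (x₀ : K) (P : K[X]) :
    P = C (P.eval x₀) + primitive x₀ (derivative P) := by
  have hconst := eq_C_of_derivative_eq_zero (p := P - primitive x₀ (derivative P))
    (by rw [derivative_sub, derivative_primitive, sub_self])
  have hcoeff : (P - primitive x₀ (derivative P)).coeff 0 = P.eval x₀ := by
    rw [← eval_C (a := (P - _).coeff 0) (x := x₀), ← hconst, eval_sub, eval_primitive_self,
      sub_zero]
  rw [← hcoeff, ← hconst, sub_add_cancel]

end Primitive

lemma derivative_mem_degreeLT {R : Type*} [Semiring R] {r : ℕ} {P : R[X]}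
    (hP : P.natDegree ≤ r) : derivative P ∈ degreeLT R r := by
  rcases eq_or_ne P 0 with rfl | h0
  · simp
  · exact mem_degreeLT.2 ((degree_derivative_lt h0).trans_le
      (degree_le_natDegree.trans (by exact_mod_cast hP)))

lemma IsPolyDeg.sub {d r : ℕ} {x y : ℝ → E d} (hx : IsPolyDeg r x) (hy : IsPolyDeg r y) :
    IsPolyDeg r (x - y) := by
  obtain ⟨p, hpdeg, hp⟩ := hx
  obtain ⟨q, hqdeg, hq⟩ := hy
  refine ⟨p - q, fun i => (natDegree_sub_le _ _).trans (max_le (hpdeg i) (hqdeg i)),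
    fun t i => ?_⟩
  simp [hp, hq]

instance {R : Type*} [Ring R] (n : ℕ) : Module.Finite R (degreeLT R n) :=
  Module.Finite.equiv (degreeLTEquiv R n).symm

set_option linter.unusedVariables false in
/-- Test functions of the cG method, `ℝ^d`-valued polynomials of degree `< r`. The interval
`(tp, tn)` is recorded in the type to carry the `L²(tp, tn)` inner product instance. -/
def TestSpace (d r : ℕ) (tp tn : ℝ) : Type := Fin d → degreeLT ℝ r

namespace TestSpace

variable {d r : ℕ} {tp tn : ℝ}

instance : AddCommGroup (TestSpace d r tp tn) :=
  inferInstanceAs (AddCommGroup (Fin d → degreeLT ℝ r))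

instance : Module ℝ (TestSpace d r tp tn) :=
  inferInstanceAs (Module ℝ (Fin d → degreeLT ℝ r))

instance : FiniteDimensional ℝ (TestSpace d r tp tn) :=
  inferInstanceAs (FiniteDimensional ℝ (Fin d → degreeLT ℝ r))

def toFun (w : TestSpace d r tp tn) (t : ℝ) : E d :=
  WithLp.toLp 2 fun i => (w i : ℝ[X]).eval t

lemma toFun_apply (w : TestSpace d r tp tn) (t : ℝ) (i : Fin d) :
    toFun w t i = (w i : ℝ[X]).eval t := rfl

lemma toFun_add (v w : TestSpace d r tp tn) (t : ℝ) :
    toFun (v + w) t = toFun v t + toFun w t := by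
  ext i
  exact eval_add

lemma toFun_sub (v w : TestSpace d r tp tn) (t : ℝ) :
    toFun (v - w) t = toFun v t - toFun w t := by
  ext i
  exact eval_sub ..

lemma toFun_smul (c : ℝ) (w : TestSpace d r tp tn) (t : ℝ) :
    toFun (c • w) t = c • toFun w t := by
  ext i
  exact eval_smul ..

@[fun_prop]
lemma continuous_toFun (w : TestSpace d r tp tn) : Continuous (toFun w) :=
  (PiLp.continuous_toLp 2 _).comp (continuous_pi fun i => (w i : ℝ[X]).continuous)

lemma eq_zero_of_eqOn_Ioo (htn : tp < tn) {w : TestSpace d r tp tn}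
    (hw : EqOn (toFun w) 0 (Ioo tp tn)) : w = 0 := by
  funext i
  refine Subtype.ext (eq_zero_of_infinite_isRoot _ ((Ioo_infinite htn).mono fun t ht => ?_))
  simpa [toFun_apply] using congrArg (·.ofLp i) (hw ht)

lemma isPolyDeg_toFun (w : TestSpace d r tp tn) : IsPolyDeg (r - 1) (toFun w) := by
  refine ⟨fun i => w i, fun i => ?_, fun t i => rfl⟩
  show (w i : ℝ[X]).natDegree ≤ r - 1
  have hdeg := mem_degreeLT.1 (w i).2
  rcases eq_or_ne (w i : ℝ[X]) 0 with h0 | h0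
  · simp [h0]
  · have := (natDegree_lt_iff_degree_lt h0).2 hdeg
    omega

lemma exists_toFun_eq (hr : 1 ≤ r) {φ : ℝ → E d} (hφ : IsPolyDeg (r - 1) φ) :
    ∃ w : TestSpace d r tp tn, toFun w = φ := by
  obtain ⟨p, hdeg, hp⟩ := hφ
  have hmem : ∀ i, p i ∈ degreeLT ℝ r := fun i =>
    mem_degreeLT.2 (degree_le_natDegree.trans_lt (by exact_mod_cast (hdeg i).trans_lt (by omega)))
  refine ⟨fun i => ⟨p i, hmem i⟩, funext fun t => ?_⟩
  ext i
  exact (hp t i).symm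

def trial (a : E d) (q : TestSpace d r tp tn) (t : ℝ) : E d :=
  a + WithLp.toLp 2 fun i => (primitive tp (q i)).eval t

lemma trial_self (a : E d) (q : TestSpace d r tp tn) : trial a q tp = a := by
  ext i
  simp [trial, eval_primitive_self]

@[fun_prop]
lemma continuous_trial (a : E d) (q : TestSpace d r tp tn) : Continuous (trial a q) :=
  continuous_const.add
    ((PiLp.continuous_toLp 2 _).comp (continuous_pi fun i => (primitive tp (q i)).continuous))

lemma hasDerivAt_trial (a : E d) (q : TestSpace d r tp tn) (t : ℝ) :
    HasDerivAt (trial a q) (toFun q t) t := by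
  have hcoord : HasDerivAt (fun s i => (primitive tp (q i)).eval s)
      (fun i => (q i : ℝ[X]).eval t) t :=
    hasDerivAt_pi.2 fun i => by simpa only [derivative_primitive] using
      (primitive tp (q i)).hasDerivAt t
  exact ((EuclideanSpace.equiv (Fin d) ℝ).symm.hasFDerivAt.comp_hasDerivAt t hcoord).const_add a

lemma deriv_trial (a : E d) (q : TestSpace d r tp tn) : deriv (trial a q) = toFun q :=
  funext fun t => (hasDerivAt_trial a q t).deriv

lemma isPolyDeg_trial (a : E d) (q : TestSpace d r tp tn) : IsPolyDeg r (trial a q) :=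
  ⟨fun i => C (a i) + primitive tp (q i), fun i => (natDegree_add_le _ _).trans
    (max_le (by simp) (natDegree_primitive_le tp (mem_degreeLT.1 (q i).2))),
    fun t i => by simp [trial]⟩

lemma exists_trial_eq {U : ℝ → E d} {a : E d} (hU : IsPolyDeg r U) (hUa : U tp = a) :
    ∃ q : TestSpace d r tp tn, trial a q = U := by
  subst hUa
  obtain ⟨p, hdeg, hp⟩ := hU
  refine ⟨fun i => ⟨derivative (p i), derivative_mem_degreeLT (hdeg i)⟩, funext fun t => ?_⟩
  ext i
  conv_rhs => rw [hp, eq_C_add_primitive_derivative tp (p i)]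
  simp [trial, hp]

variable [Fact (tp < tn)]

instance innerProductCore : InnerProductSpace.Core ℝ (TestSpace d r tp tn) where
  inner v w := ∫ t in tp..tn, ⟪toFun v t, toFun w t⟫
  conj_inner_symm v w := by simp_rw [conj_trivial, real_inner_comm]
  re_inner_nonneg v :=
    intervalIntegral.integral_nonneg (Fact.out : tp < tn).le fun t _ => real_inner_self_nonneg
  add_left u v w := by
    simp_rw [toFun_add, inner_add_left]
    exact intervalIntegral.integral_add (Continuous.intervalIntegrable (by fun_prop) _ _)
      (Continuous.intervalIntegrable (by fun_prop) _ _)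
  smul_left v w c := by
    simp_rw [conj_trivial, toFun_smul, real_inner_smul_left]
    exact intervalIntegral.integral_const_mul c _
  definite v hv := by
    refine eq_zero_of_eqOn_Ioo Fact.out fun t ht => ?_
    have hzero := eqOn_Ioo_zero_of_integral_eq_zero (Fact.out : tp < tn).le
      ((continuous_toFun v).inner (continuous_toFun v)) (fun t => real_inner_self_nonneg) hv ht
    simpa using hzero

instance : NormedAddCommGroup (TestSpace d r tp tn) :=
  innerProductCore.toNormedAddCommGroup

instance : InnerProductSpace ℝ (TestSpace d r tp tn) :=
  InnerProductSpace.ofCore innerProductCore.toCore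

instance : CompleteSpace (TestSpace d r tp tn) := FiniteDimensional.complete ℝ _

lemma inner_def (v w : TestSpace d r tp tn) :
    ⟪v, w⟫ = ∫ t in tp..tn, ⟪toFun v t, toFun w t⟫ := rfl

lemma norm_eq_L2norm (w : TestSpace d r tp tn) : ‖w‖ = L2norm (toFun w) tp tn := by
  simp_rw [norm_eq_sqrt_real_inner, inner_def, real_inner_self_eq_norm_sq, L2norm]

def pairing (f : C(ℝ, E d)) : StrongDual ℝ (TestSpace d r tp tn) :=
  LinearMap.mkContinuous
    { toFun w := ∫ t in tp..tn, ⟪f t, toFun w t⟫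
      map_add' v w := by
        simp_rw [toFun_add, inner_add_right]
        exact intervalIntegral.integral_add (Continuous.intervalIntegrable (by fun_prop) _ _)
          (Continuous.intervalIntegrable (by fun_prop) _ _)
      map_smul' c w := by
        simp_rw [toFun_smul, real_inner_smul_right]
        exact intervalIntegral.integral_const_mul c _ }
    (L2norm f tp tn) fun w => by
      rw [Real.norm_eq_abs, norm_eq_L2norm]
      exact abs_integral_inner_le (Fact.out : tp < tn).le f.continuous (continuous_toFun w)

lemma pairing_apply (f : C(ℝ, E d)) (w : TestSpace d r tp tn) :
    pairing f w = ∫ t in tp..tn, ⟪f t, toFun w t⟫ := rfl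

lemma norm_pairing_sub_le (f g : C(ℝ, E d)) :
    ‖(pairing f - pairing g : StrongDual ℝ (TestSpace d r tp tn))‖ ≤ L2norm (f - g) tp tn := by
  have hsub : (pairing f - pairing g : StrongDual ℝ (TestSpace d r tp tn)) = pairing (f - g) := by
    ext w
    simp_rw [sub_apply, pairing_apply, ContinuousMap.sub_apply, inner_sub_left]
    exact (intervalIntegral.integral_sub (Continuous.intervalIntegrable (by fun_prop) _ _)
      (Continuous.intervalIntegrable (by fun_prop) _ _)).symm
  rw [hsub]
  exact LinearMap.mkContinuous_norm_le _ (L2norm_nonneg _ _ _) _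

lemma L2norm_trial_sub_le {c : ℝ} (hPoincare : ∀ y : ℝ → E d, IsPolyDeg r y → y tp = 0 →
      L2norm y tp tn ≤ c * L2norm (deriv y) tp tn) (a : E d) (q₁ q₂ : TestSpace d r tp tn) :
    L2norm (trial a q₁ - trial a q₂) tp tn ≤ c * ‖q₁ - q₂‖ := by
  have hderiv : deriv (trial a q₁ - trial a q₂) = toFun (q₁ - q₂) := funext fun t => by
    rw [((hasDerivAt_trial a q₁ t).sub (hasDerivAt_trial a q₂ t)).deriv, toFun_sub]
  have hzero : (trial a q₁ - trial a q₂) tp = 0 := by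
    rw [Pi.sub_apply, trial_self, trial_self, sub_self]
  simpa only [hderiv, ← norm_eq_L2norm] using
    hPoincare _ (IsPolyDeg.sub (isPolyDeg_trial a q₁) (isPolyDeg_trial a q₂)) hzero

lemma cG_iff_inner_eq (hr : 1 ≤ r) (f : ℝ → E d) (a : E d) (q : TestSpace d r tp tn) :
    (∀ φ : ℝ → E d, IsPolyDeg (r - 1) φ →
      ∫ s in tp..tn, ⟪deriv (trial a q) s, φ s⟫ = ∫ s in tp..tn, ⟪f s, φ s⟫) ↔
    ∀ w, ⟪q, w⟫ = ∫ s in tp..tn, ⟪f s, toFun w s⟫ := by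
  rw [deriv_trial]
  refine ⟨fun h w => h _ (isPolyDeg_toFun w), fun h φ hφ => ?_⟩
  obtain ⟨w, rfl⟩ := exists_toFun_eq (tp := tp) (tn := tn) hr hφ
  exact h w

def picardFunctional {F : ℝ → E d → E d} (hF : Continuous fun p : ℝ × E d => F p.1 p.2)
    (a : E d) (q : TestSpace d r tp tn) : StrongDual ℝ (TestSpace d r tp tn) :=
  pairing ⟨fun s => F s (trial a q s), hF.comp (continuous_id.prodMk (continuous_trial a q))⟩

lemma lipschitzWith_picardFunctional {F : ℝ → E d → E d}
    (hF : Continuous fun p : ℝ × E d => F p.1 p.2) {L : ℝ} (hL : 0 ≤ L)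
    (hFlip : ∀ (s : ℝ) (v w : E d), ‖F s v - F s w‖ ≤ L * ‖v - w‖) {c : ℝ}
    (hPoincare : ∀ y : ℝ → E d, IsPolyDeg r y → y tp = 0 →
      L2norm y tp tn ≤ c * L2norm (deriv y) tp tn) (a : E d) :
    LipschitzWith (L * c).toNNReal (picardFunctional (r := r) (tp := tp) (tn := tn) hF a) := by
  refine LipschitzWith.of_dist_le' fun q₁ q₂ => ?_
  rw [dist_eq_norm, dist_eq_norm]
  calc ‖picardFunctional hF a q₁ - picardFunctional hF a q₂‖
      ≤ L2norm (fun s => F s (trial a q₁ s) - F s (trial a q₂ s)) tp tn :=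
        norm_pairing_sub_le _ _
    _ ≤ L * L2norm (trial a q₁ - trial a q₂) tp tn :=
        L2norm_le_mul (Fact.out : tp < tn).le hL (by fun_prop) (by fun_prop)
          fun s => hFlip s _ _
    _ ≤ L * (c * ‖q₁ - q₂‖) := by gcongr; exact L2norm_trial_sub_le hPoincare a q₁ q₂
    _ = L * c * ‖q₁ - q₂‖ := by ring

end TestSpace

end

end CGPicard

open CGPicard TestSpace

theorem picard_cG_wellposed_general {d : ℕ} (tp tn : ℝ) (htn : tp < tn) (rn : ℕ) (hrn : 1 ≤ rn)
    (F : ℝ → E d → E d) (L : ℝ) (hL : 0 ≤ L)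
    (hFcont : Continuous fun p : ℝ × E d => F p.1 p.2)
    (hFlip : ∀ (s : ℝ) (v w : E d), ‖F s v - F s w‖ ≤ L * ‖v - w‖)
    (C_P : ℝ)
    (hPoincare : ∀ y : ℝ → E d, IsPolyDeg rn y → y tp = 0 →
      L2norm y tp tn ≤ (tn - tp) * C_P * L2norm (deriv y) tp tn)
    (hk : tn - tp < (L * C_P)⁻¹) (a : E d) :
    ∃! U : ℝ → E d, IsPolyDeg rn U ∧ U tp = a ∧
      ∀ φ : ℝ → E d, IsPolyDeg (rn - 1) φ →
        (∫ s in tp..tn, ⟪deriv U s, φ s⟫) = ∫ s in tp..tn, ⟪F s (U s), φ s⟫ := by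
  have : Fact (tp < tn) := ⟨htn⟩
  have hLC : 0 < L * C_P := inv_pos.1 ((sub_pos.2 htn).trans hk)
  have hK : L * ((tn - tp) * C_P) < 1 := by
    have := (lt_inv_mul_iff₀' hLC).1 (by rwa [mul_one])
    linarith [show L * ((tn - tp) * C_P) = (tn - tp) * (L * C_P) by ring]
  obtain ⟨q, hq, huniq⟩ := existsUnique_inner_eq_of_lipschitzWith (Real.toNNReal_lt_one.2 hK)
    (lipschitzWith_picardFunctional (r := rn) hFcont hL hFlip hPoincare a)
  refine ⟨trial a q, ⟨isPolyDeg_trial a q, trial_self a q, (cG_iff_inner_eq hrn _ a q).2 hq⟩,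
    ?_⟩
  rintro U ⟨hU, hUa, hcG⟩
  obtain ⟨q', rfl⟩ := exists_trial_eq (tn := tn) hU hUa
  rw [huniq q' ((cG_iff_inner_eq hrn _ _ q').1 hcG)]

/-- Specialization of the well-posedness theorem to the Picard linearization `A ≡ 0`:
if `F` is continuous and Lipschitz with constant `L` and `kₙ < (L C_P)⁻¹`, then for any
initial value `a` there is a unique polynomial `U` of degree `rₙ` with `U(tₙ₋₁) = a`
satisfying the cG equations on `Iₙ`. -/
theorem picard_cG_wellposed {d : ℕ} (tp tn : ℝ) (htn : tp < tn) (rn : ℕ) (hrn : 1 ≤ rn)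
    (F : ℝ → E d → E d) (L : ℝ) (hL : 0 ≤ L)
    (hFcont : Continuous fun p : ℝ × E d => F p.1 p.2)
    (hFlip : ∀ (s : ℝ) (v w : E d), ‖F s v - F s w‖ ≤ L * ‖v - w‖)
    (C_P : ℝ) (hCP : 0 < C_P)
    (hPoincare : ∀ y : ℝ → E d, IsPolyDeg rn y → y tp = 0 →
      L2norm y tp tn ≤ (tn - tp) * C_P * L2norm (deriv y) tp tn)
    (hk : tn - tp < (L * C_P)⁻¹) (a : E d) :
    ∃! U : ℝ → E d, IsPolyDeg rn U ∧ U tp = a ∧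
      ∀ φ : ℝ → E d, IsPolyDeg (rn - 1) φ →
        (∫ s in tp..tn, ⟪deriv U s, φ s⟫) = ∫ s in tp..tn, ⟪F s (U s), φ s⟫ :=
  picard_cG_wellposed_general tp tn htn rn hrn F L hL hFcont hFlip C_P hPoincare hk a
end
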